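/- Let G be a minimal counterexample to the statement that all planar graphs have 3-weak-dynamic number at most 6, chosen with the fewest edges and, among those, the fewest vertices. Then G does not contain six distinct vertices v_1, v_2, v_3, v_4, v_5, v_6 such that v_1v_2, v_2v_3, v_3v_4, v_2v_5, v_3v_6 are edges of G, d(v_1) ≥ 4, d(v_4) ≥ 4, and d(v_2) = d(v_3) = d(v_5) = d(v_6) = 3. -/

import Mathlib

/-!
Delete the edges at `v₂` and `v₃`. The resulting planar graph `H` has fewer edges, hence a
3-weak-dynamic 6-colouring `c`. In `H` the vertices `v₅` and `v₆` have degree 2, so each of them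
can be recoloured avoiding the at most four colours its neighbours depend on and one more colour;
this gives `c v₅ ≠ c v₁` and `c v₆ ≠ c v₄`. Now colour `v₂` outside `{c v₄, c v₆}` and the two
colours `v₅` sees in `H`, and `v₃` outside `{c v₁, c v₅}` and the two colours `v₆` sees in `H`.
Then `v₂`, `v₃`, `v₅`, `v₆` see three colours each, and every other vertex sees in `G` all the
colours it saw in `H`, which is enough because `v₁` and `v₄` keep at least three neighbours in `H`.
-/

open SimpleGraph

/-- `H` is a minor of `G`: there are nonempty, connected, pairwise disjoint branch sets
in `G`, with an edge of `G` between the branch sets of any two adjacent vertices of `H`. -/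
def HasMinor {V W : Type} (G : SimpleGraph V) (H : SimpleGraph W) : Prop :=
  ∃ f : W → Set V,
    (∀ w, (f w).Nonempty) ∧
    (∀ w, (G.induce (f w)).Connected) ∧
    (∀ w w', w ≠ w' → Disjoint (f w) (f w')) ∧
    (∀ w w', H.Adj w w' → ∃ a ∈ f w, ∃ b ∈ f w', G.Adj a b)

/-- A graph is planar iff it has no `K₅` minor and no `K_{3,3}` minor (Wagner's theorem). -/
def IsPlanar {V : Type} (G : SimpleGraph V) : Prop :=
  ¬ HasMinor G (⊤ : SimpleGraph (Fin 5)) ∧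
  ¬ HasMinor G (completeBipartiteGraph (Fin 3) (Fin 3))

/-- The degree of a vertex `v`, the number of its neighbors. -/
noncomputable def deg {V : Type} (G : SimpleGraph V) (v : V) : ℕ :=
  (G.neighborSet v).ncard

/-- `G` admits a `k`-weak-dynamic coloring with `n` colors: a (not necessarily proper)
coloring such that every vertex `v` sees at least `min k (d v)` colors on its neighborhood. -/
def WDColorable {V : Type} (G : SimpleGraph V) (k n : ℕ) : Prop :=
  ∃ c : V → Fin n, ∀ v, min k (deg G v) ≤ (c '' G.neighborSet v).ncard

open Function

theorem HasMinor.mono {V W : Type} {G G' : SimpleGraph V} {H : SimpleGraph W} (hle : G ≤ G')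
    (h : HasMinor G H) : HasMinor G' H := by
  obtain ⟨f, hne, hconn, hdisj, hadj⟩ := h
  refine ⟨f, hne, fun w => (hconn w).mono fun _ _ hab => hle hab, hdisj, fun w w' hww' => ?_⟩
  obtain ⟨a, ha, b, hb, hab⟩ := hadj w w' hww'
  exact ⟨a, ha, b, hb, hle hab⟩

theorem IsPlanar.anti {V : Type} {G G' : SimpleGraph V} (hle : G ≤ G') (h : IsPlanar G') :
    IsPlanar G :=
  ⟨fun hK₅ => h.1 (hK₅.mono hle), fun hK₃₃ => h.2 (hK₃₃.mono hle)⟩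

theorem Set.exists_notMem_of_ncard_lt_card {α : Type*} [Finite α] {s : Set α}
    (hs : s.ncard < Nat.card α) : ∃ a, a ∉ s :=
  (Set.ne_univ_iff_exists_notMem s).1 fun h => by simp [h] at hs

def IsWDColoring {V : Type} {α : Type*} (G : SimpleGraph V) (k : ℕ) (c : V → α) : Prop :=
  ∀ v, min k (deg G v) ≤ (c '' G.neighborSet v).ncard

section Coloring

variable {V : Type} {α : Type*} {G H : SimpleGraph V} {k : ℕ} {c c' : V → α} {v x : V}

theorem min_le_ncard_image_update [Finite V] [DecidableEq V] {a : α}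
    (hv : min k (deg G v) ≤ (c '' G.neighborSet v).ncard)
    (ha : x ∈ G.neighborSet v → (c '' (G.neighborSet v \ {x})).ncard < min k (deg G v) →
      a ∉ c '' (G.neighborSet v \ {x})) :
    min k (deg G v) ≤ (update c x a '' G.neighborSet v).ncard := by
  by_cases hx : x ∈ G.neighborSet v
  · set D := c '' (G.neighborSet v \ {x})
    have himage (b : α) : update c x b '' G.neighborSet v = insert b D := by
      have hagree : Set.EqOn (update c x b) c (G.neighborSet v \ {x}) :=
        fun u hu => update_of_ne hu.2 b c
      rw [← Set.insert_sdiff_self_of_mem hx, Set.image_insert_eq, update_self, hagree.image_eq]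
    have hD : min k (deg G v) ≤ D.ncard + 1 := by
      rw [← update_eq_self x c, himage] at hv
      exact hv.trans (Set.ncard_insert_le _ _)
    rw [himage]
    by_cases hsmall : D.ncard < min k (deg G v)
    · rwa [Set.ncard_insert_of_notMem (ha hx hsmall)]
    · exact (not_lt.1 hsmall).trans (Set.ncard_le_ncard_insert _ _)
  · have hagree : Set.EqOn (update c x a) c (G.neighborSet v) :=
      fun u hu => update_of_ne (ne_of_mem_of_not_mem hu hx) a c
    rwa [hagree.image_eq]

theorem IsWDColoring.exists_update [Finite V] [DecidableEq V] [Finite α]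
    (hc : IsWDColoring G k c) (x : V) {E : Set α} (hE : E.ncard + (k - 1) * deg G x < Nat.card α) :
    ∃ a ∉ E, IsWDColoring G k (update c x a) := by
  let low (u : V) : Set α :=
    if (c '' (G.neighborSet u \ {x})).ncard < min k (deg G u) then c '' (G.neighborSet u \ {x})
    else ∅
  have hlow (u : V) : (low u).ncard ≤ k - 1 := by
    dsimp only [low]
    split_ifs with h
    · omega
    · simp
  let N := (Set.toFinite (G.neighborSet x)).toFinset
  have hF : (E ∪ ⋃ u ∈ N, low u).ncard < Nat.card α := calc
    _ ≤ E.ncard + ∑ u ∈ N, (low u).ncard :=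
      (Set.ncard_union_le _ _).trans (Nat.add_le_add_left (N.set_ncard_biUnion_le low) _)
    _ ≤ E.ncard + N.card * (k - 1) := by
      grw [Finset.sum_le_card_nsmul N _ _ fun u _ => hlow u, smul_eq_mul]
    _ = E.ncard + (k - 1) * deg G x := by
      rw [deg, Set.ncard_eq_toFinset_card (G.neighborSet x), mul_comm]
    _ < _ := hE
  obtain ⟨a, ha⟩ := Set.exists_notMem_of_ncard_lt_card hF
  refine ⟨a, fun haE => ha (Or.inl haE), fun v => min_le_ncard_image_update (hc v) ?_⟩
  intro hxv hsmall haD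
  refine ha (Or.inr (Set.mem_biUnion (x := v) ?_ ?_))
  · simpa [N] using (G.mem_neighborSet _ _).1 hxv |>.symm
  · simpa only [low, if_pos hsmall] using haD

theorem min_le_ncard_image_of_neighborSet_eq_triple {y z : V}
    (hN : G.neighborSet v = {x, y, z}) (hxy : c x ≠ c y) (hxz : c x ≠ c z) (hyz : c y ≠ c z) :
    min k (deg G v) ≤ (c '' G.neighborSet v).ncard := by
  have hdeg : deg G v = 3 := by
    rw [deg, hN]
    exact Set.ncard_eq_three.2 ⟨x, y, z, ne_of_apply_ne c hxy, ne_of_apply_ne c hxz,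
      ne_of_apply_ne c hyz, rfl⟩
  rw [hN, Set.image_insert_eq, Set.image_insert_eq, Set.image_singleton,
    Set.ncard_eq_three.2 ⟨_, _, _, hxy, hxz, hyz, rfl⟩, ← hdeg]
  exact min_le_right _ _

theorem min_le_ncard_image_of_neighborSet_eq_insert [Finite V]
    (hN : G.neighborSet v = insert x (H.neighborSet v)) (hx : x ∉ H.neighborSet v)
    (hc : min k (deg H v) ≤ (c '' H.neighborSet v).ncard)
    (hagree : Set.EqOn c' c (H.neighborSet v)) (hnew : c' x ∉ c '' H.neighborSet v) :
    min k (deg G v) ≤ (c' '' G.neighborSet v).ncard := by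
  have hdeg : deg G v = deg H v + 1 := by rw [deg, deg, hN, Set.ncard_insert_of_notMem hx]
  rw [hN, Set.image_insert_eq, hagree.image_eq, Set.ncard_insert_of_notMem hnew, hdeg]
  omega

theorem min_le_ncard_image_of_le [Finite V] (hle : H ≤ G) (hdeg : min k (deg G v) ≤ min k (deg H v))
    (hc : min k (deg H v) ≤ (c '' H.neighborSet v).ncard)
    (hagree : Set.EqOn c' c (H.neighborSet v)) :
    min k (deg G v) ≤ (c' '' G.neighborSet v).ncard := calc
  _ ≤ (c '' H.neighborSet v).ncard := hdeg.trans hc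
  _ = (c' '' H.neighborSet v).ncard := by rw [hagree.image_eq]
  _ ≤ _ := Set.ncard_le_ncard (Set.image_mono (neighborSet_mono hle v))

end Coloring

section Graph

variable {V : Type} {G : SimpleGraph V} {v x y z : V}

theorem neighborSet_eq_of_deg_eq_three (hdeg : deg G v = 3) (hx : G.Adj v x) (hy : G.Adj v y)
    (hz : G.Adj v z) (hxy : x ≠ y) (hxz : x ≠ z) (hyz : y ≠ z) :
    G.neighborSet v = {x, y, z} := by
  refine (Set.eq_of_subset_of_ncard_le ?_ ?_ (Set.finite_of_ncard_ne_zero ?_)).symm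
  · rintro w (rfl | rfl | rfl) <;> assumption
  · rw [← deg, hdeg, Set.ncard_eq_three.2 ⟨x, y, z, hxy, hxz, hyz, rfl⟩]
  · rw [← deg, hdeg]; decide

theorem neighborSet_deleteIncidenceSet_of_ne (hv : v ≠ x) :
    (G.deleteIncidenceSet x).neighborSet v = G.neighborSet v \ {x} := by
  ext w
  simp [deleteIncidenceSet_adj, hv]

theorem notMem_neighborSet_deleteIncidenceSet : x ∉ (G.deleteIncidenceSet x).neighborSet v :=
  fun h => (deleteIncidenceSet_adj.1 h).2.2 rfl

theorem notMem_neighborSet_deleteIncidenceSet_deleteIncidenceSet :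
    x ∉ ((G.deleteIncidenceSet x).deleteIncidenceSet y).neighborSet v :=
  fun hx => notMem_neighborSet_deleteIncidenceSet <|
    neighborSet_mono (deleteIncidenceSet_le _ _) v hx

theorem ncard_edgeSet_lt_of_lt [Finite V] {H : SimpleGraph V} (hlt : H < G) :
    H.edgeSet.ncard < G.edgeSet.ncard :=
  Set.ncard_lt_ncard (edgeSet_strict_mono hlt)

end Graph

structure IsConfig4334 {V : Type} (G : SimpleGraph V) (v₁ v₂ v₃ v₄ v₅ v₆ : V) : Prop where
  pairwise_ne : [v₁, v₂, v₃, v₄, v₅, v₆].Pairwise (· ≠ ·)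
  adj₁₂ : G.Adj v₁ v₂
  adj₂₃ : G.Adj v₂ v₃
  adj₃₄ : G.Adj v₃ v₄
  adj₂₅ : G.Adj v₂ v₅
  adj₃₆ : G.Adj v₃ v₆
  deg₁ : 4 ≤ deg G v₁
  deg₄ : 4 ≤ deg G v₄
  deg₂ : deg G v₂ = 3
  deg₃ : deg G v₃ = 3
  deg₅ : deg G v₅ = 3
  deg₆ : deg G v₆ = 3

namespace IsConfig4334

variable {V : Type} {G : SimpleGraph V} {v₁ v₂ v₃ v₄ v₅ v₆ : V}
  (h : IsConfig4334 G v₁ v₂ v₃ v₄ v₅ v₆)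
include h

theorem distinct :
    (v₁ ≠ v₂ ∧ v₁ ≠ v₃ ∧ v₁ ≠ v₄ ∧ v₁ ≠ v₅ ∧ v₁ ≠ v₆) ∧ (v₂ ≠ v₃ ∧ v₂ ≠ v₄ ∧ v₂ ≠ v₅ ∧ v₂ ≠ v₆) ∧
      (v₃ ≠ v₄ ∧ v₃ ≠ v₅ ∧ v₃ ≠ v₆) ∧ (v₄ ≠ v₅ ∧ v₄ ≠ v₆) ∧ v₅ ≠ v₆ := by
  simpa using h.pairwise_ne

theorem neighborSet_v₂ : G.neighborSet v₂ = {v₁, v₃, v₅} := by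
  obtain ⟨⟨-, h₁₃, -, h₁₅, -⟩, -, ⟨-, h₃₅, -⟩, -⟩ := h.distinct
  exact neighborSet_eq_of_deg_eq_three h.deg₂ h.adj₁₂.symm h.adj₂₃ h.adj₂₅ h₁₃ h₁₅ h₃₅

theorem neighborSet_v₃ : G.neighborSet v₃ = {v₂, v₄, v₆} := by
  obtain ⟨-, ⟨-, h₂₄, -, h₂₆⟩, -, ⟨-, h₄₆⟩, -⟩ := h.distinct
  exact neighborSet_eq_of_deg_eq_three h.deg₃ h.adj₂₃.symm h.adj₃₄ h.adj₃₆ h₂₄ h₂₆ h₄₆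

theorem deleteIncidenceSet_lt : (G.deleteIncidenceSet v₂).deleteIncidenceSet v₃ < G :=
  ((deleteIncidenceSet_le _ _).trans (deleteIncidenceSet_le _ _)).lt_of_ne fun hG =>
    notMem_neighborSet_deleteIncidenceSet (G := G.deleteIncidenceSet v₂) (v := v₂)
      (by rw [mem_neighborSet, hG]; exact h.adj₂₃)

theorem neighborSet_v₅ :
    G.neighborSet v₅ =
      insert v₂ (((G.deleteIncidenceSet v₂).deleteIncidenceSet v₃).neighborSet v₅) := by
  obtain ⟨-, ⟨-, -, h₂₅, -⟩, ⟨-, h₃₅, -⟩, ⟨h₄₅, -⟩, h₅₆⟩ := h.distinct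
  have h₃ : v₃ ∉ G.neighborSet v₅ \ {v₂} := fun h₃ => by
    have h₅ : v₅ ∈ G.neighborSet v₃ := h₃.1.symm
    simp [h.neighborSet_v₃, h₂₅.symm, h₄₅.symm, h₅₆] at h₅
  rw [neighborSet_deleteIncidenceSet_of_ne h₃₅.symm, neighborSet_deleteIncidenceSet_of_ne h₂₅.symm,
    Set.sdiff_singleton_eq_self h₃,
    Set.insert_sdiff_self_of_mem (s := G.neighborSet v₅) h.adj₂₅.symm]

theorem neighborSet_v₆ :
    G.neighborSet v₆ =
      insert v₃ (((G.deleteIncidenceSet v₂).deleteIncidenceSet v₃).neighborSet v₆) := by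
  obtain ⟨⟨-, -, -, -, h₁₆⟩, ⟨-, -, -, h₂₆⟩, ⟨-, -, h₃₆⟩, -, h₅₆⟩ := h.distinct
  have h₂ : v₂ ∉ G.neighborSet v₆ := fun h₂ => by
    have h₆ : v₆ ∈ G.neighborSet v₂ := h₂.symm
    simp [h.neighborSet_v₂, h₁₆.symm, h₃₆.symm, h₅₆.symm] at h₆
  rw [neighborSet_deleteIncidenceSet_of_ne h₃₆.symm, neighborSet_deleteIncidenceSet_of_ne h₂₆.symm,
    Set.sdiff_singleton_eq_self h₂,
    Set.insert_sdiff_self_of_mem (s := G.neighborSet v₆) h.adj₃₆.symm]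

theorem deg_v₅ [Finite V] : deg ((G.deleteIncidenceSet v₂).deleteIncidenceSet v₃) v₅ = 2 := by
  have h₅ := h.deg₅
  rw [deg, h.neighborSet_v₅,
    Set.ncard_insert_of_notMem notMem_neighborSet_deleteIncidenceSet_deleteIncidenceSet] at h₅
  rw [deg]
  omega

theorem deg_v₆ [Finite V] : deg ((G.deleteIncidenceSet v₂).deleteIncidenceSet v₃) v₆ = 2 := by
  have h₆ := h.deg₆
  rw [deg, h.neighborSet_v₆, Set.ncard_insert_of_notMem notMem_neighborSet_deleteIncidenceSet] at h₆
  rw [deg]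
  omega

theorem min_three_deg_le_deleteIncidenceSet [Finite V] {v : V} (hv₂ : v ≠ v₂) (hv₃ : v ≠ v₃)
    (hv₅ : v ≠ v₅) (hv₆ : v ≠ v₆) :
    min 3 (deg G v) ≤ min 3 (deg ((G.deleteIncidenceSet v₂).deleteIncidenceSet v₃) v) := by
  obtain ⟨⟨-, -, h₁₄, -, -⟩, -⟩ := h.distinct
  have h₂ : v₂ ∈ G.neighborSet v → v = v₁ := fun hv => by
    have hv' : v ∈ G.neighborSet v₂ := G.adj_symm hv
    simpa [h.neighborSet_v₂, hv₃, hv₅] using hv'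
  have h₃ : v₃ ∈ G.neighborSet v → v = v₄ := fun hv => by
    have hv' : v ∈ G.neighborSet v₃ := G.adj_symm hv
    simpa [h.neighborSet_v₃, hv₂, hv₆] using hv'
  rw [deg, deg, neighborSet_deleteIncidenceSet_of_ne hv₃, neighborSet_deleteIncidenceSet_of_ne hv₂]
  by_cases hv₁ : v = v₁
  · have hv₃' : v₃ ∉ G.neighborSet v \ {v₂} := fun hm => h₁₄ (hv₁ ▸ h₃ hm.1)
    have hdeg := h.deg₁
    rw [Set.sdiff_singleton_eq_self hv₃', Set.ncard_sdiff_singleton_of_mem (hv₁ ▸ h.adj₁₂)]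
    rw [deg, ← hv₁] at hdeg
    omega
  by_cases hv₄ : v = v₄
  · have hv₂' : v₂ ∉ G.neighborSet v := fun hm => h₁₄ (hv₄ ▸ h₂ hm).symm
    have hdeg := h.deg₄
    rw [Set.sdiff_singleton_eq_self hv₂', Set.ncard_sdiff_singleton_of_mem (hv₄ ▸ h.adj₃₄.symm)]
    rw [deg, ← hv₄] at hdeg
    omega
  rw [Set.sdiff_singleton_eq_self (mt h₂ hv₁), Set.sdiff_singleton_eq_self fun hm => hv₄ (h₃ hm)]

theorem exists_isWDColoring_ne [Finite V] [DecidableEq V] {c : V → Fin 6}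
    (hc : IsWDColoring ((G.deleteIncidenceSet v₂).deleteIncidenceSet v₃) 3 c) :
    ∃ c' : V → Fin 6, IsWDColoring ((G.deleteIncidenceSet v₂).deleteIncidenceSet v₃) 3 c' ∧
      c' v₅ ≠ c' v₁ ∧ c' v₆ ≠ c' v₄ := by
  obtain ⟨⟨-, -, -, h₁₅, h₁₆⟩, -, -, ⟨h₄₅, h₄₆⟩, h₅₆⟩ := h.distinct
  obtain ⟨s, hs, hc₁⟩ := hc.exists_update v₅ (E := {c v₁}) (by simp [h.deg_v₅])
  obtain ⟨t, ht, hc₂⟩ := hc₁.exists_update v₆ (E := {c v₄}) (by simp [h.deg_v₆])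
  refine ⟨_, hc₂, ?_, ?_⟩
  · rwa [update_of_ne h₅₆, update_self, update_of_ne h₁₆, update_of_ne h₁₅]
  · rwa [update_self, update_of_ne h₄₆, update_of_ne h₄₅]

theorem isWDColoring_of_agree [Finite V] {α : Type*} {c c' : V → α}
    (hc : IsWDColoring ((G.deleteIncidenceSet v₂).deleteIncidenceSet v₃) 3 c)
    (h₅ : c v₅ ≠ c v₁) (h₆ : c v₆ ≠ c v₄) (hoff : ∀ u, u ≠ v₂ → u ≠ v₃ → c' u = c u)
    (h₂₄ : c' v₂ ≠ c v₄) (h₂₆ : c' v₂ ≠ c v₆)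
    (h₂₅ : c' v₂ ∉ c '' ((G.deleteIncidenceSet v₂).deleteIncidenceSet v₃).neighborSet v₅)
    (h₃₁ : c' v₃ ≠ c v₁) (h₃₅ : c' v₃ ≠ c v₅)
    (h₃₆ : c' v₃ ∉ c '' ((G.deleteIncidenceSet v₂).deleteIncidenceSet v₃).neighborSet v₆) :
    IsWDColoring G 3 c' := by
  obtain ⟨⟨n₁₂, n₁₃, -, -, -⟩, ⟨-, n₂₄, n₂₅, n₂₆⟩, ⟨n₃₄, n₃₅, n₃₆⟩, -⟩ := h.distinct
  have hagree (u : V) :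
      Set.EqOn c' c (((G.deleteIncidenceSet v₂).deleteIncidenceSet v₃).neighborSet u) :=
    fun w hw => hoff w
      (ne_of_mem_of_not_mem hw notMem_neighborSet_deleteIncidenceSet_deleteIncidenceSet)
      (ne_of_mem_of_not_mem hw notMem_neighborSet_deleteIncidenceSet)
  have e₁ := hoff v₁ n₁₂ n₁₃
  have e₄ := hoff v₄ n₂₄.symm n₃₄.symm
  have e₅ := hoff v₅ n₂₅.symm n₃₅.symm
  have e₆ := hoff v₆ n₂₆.symm n₃₆.symm
  intro v
  by_cases hv₂ : v = v₂
  · rw [hv₂]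
    exact min_le_ncard_image_of_neighborSet_eq_triple h.neighborSet_v₂ (by rw [e₁]; exact h₃₁.symm)
      (by rw [e₁, e₅]; exact h₅.symm) (by rw [e₅]; exact h₃₅)
  by_cases hv₃ : v = v₃
  · rw [hv₃]
    exact min_le_ncard_image_of_neighborSet_eq_triple h.neighborSet_v₃ (by rw [e₄]; exact h₂₄)
      (by rw [e₆]; exact h₂₆) (by rw [e₄, e₆]; exact h₆.symm)
  by_cases hv₅ : v = v₅
  · rw [hv₅]
    exact min_le_ncard_image_of_neighborSet_eq_insert h.neighborSet_v₅
      notMem_neighborSet_deleteIncidenceSet_deleteIncidenceSet (hc v₅) (hagree v₅) h₂₅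
  by_cases hv₆ : v = v₆
  · rw [hv₆]
    exact min_le_ncard_image_of_neighborSet_eq_insert h.neighborSet_v₆
      notMem_neighborSet_deleteIncidenceSet (hc v₆) (hagree v₆) h₃₆
  exact min_le_ncard_image_of_le h.deleteIncidenceSet_lt.le
    (h.min_three_deg_le_deleteIncidenceSet hv₂ hv₃ hv₅ hv₆) (hc v) (hagree v)

theorem wdColorable_of_isWDColoring [Finite V] {c : V → Fin 6}
    (hc : IsWDColoring ((G.deleteIncidenceSet v₂).deleteIncidenceSet v₃) 3 c)
    (h₅ : c v₅ ≠ c v₁) (h₆ : c v₆ ≠ c v₄) : WDColorable G 3 6 := by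
  classical
  have hpick (p q : Fin 6) {u : V}
      (hu : deg ((G.deleteIncidenceSet v₂).deleteIncidenceSet v₃) u = 2) :
      ∃ a, a ∉ ({p, q} : Set (Fin 6)) ∪
        c '' ((G.deleteIncidenceSet v₂).deleteIncidenceSet v₃).neighborSet u :=
    Set.exists_notMem_of_ncard_lt_card <| calc
      _ ≤ ({p, q} : Set (Fin 6)).ncard +
          (c '' ((G.deleteIncidenceSet v₂).deleteIncidenceSet v₃).neighborSet u).ncard :=
        Set.ncard_union_le _ _
      _ ≤ ({q} : Set (Fin 6)).ncard + 1 + 2 :=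
        add_le_add (Set.ncard_insert_le _ _) (hu ▸ Set.ncard_image_le (Set.toFinite _))
      _ < Nat.card (Fin 6) := by simp
  obtain ⟨a, ha⟩ := hpick (c v₄) (c v₆) h.deg_v₅
  obtain ⟨b, hb⟩ := hpick (c v₁) (c v₅) h.deg_v₆
  simp only [Set.mem_union, Set.mem_insert_iff, Set.mem_singleton_iff, not_or] at ha hb
  obtain ⟨-, ⟨n₂₃, -⟩, -⟩ := h.distinct
  have e₂ : update (update c v₂ a) v₃ b v₂ = a := by rw [update_of_ne n₂₃, update_self]
  have e₃ : update (update c v₂ a) v₃ b v₃ = b := update_self _ _ _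
  rw [← e₂] at ha
  rw [← e₃] at hb
  refine ⟨_, h.isWDColoring_of_agree hc h₅ h₆ (fun u hu₂ hu₃ => ?_) ha.1.1 ha.1.2 ha.2
    hb.1.1 hb.1.2 hb.2⟩
  rw [update_of_ne hu₃, update_of_ne hu₂]

end IsConfig4334

theorem minCounterexample_no_4_3_3_4_configuration_general {V : Type} [Fintype V] (G : SimpleGraph V)
    (hplanar : IsPlanar G) (hcex : ¬ WDColorable G 3 6)
    (hminEdges : ∀ (W : Type) [Fintype W] (H : SimpleGraph W),
      IsPlanar H → H.edgeSet.ncard < G.edgeSet.ncard → WDColorable H 3 6) :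
    ¬ ∃ v₁ v₂ v₃ v₄ v₅ v₆ : V,
      ([v₁, v₂, v₃, v₄, v₅, v₆] : List V).Pairwise (· ≠ ·) ∧
      G.Adj v₁ v₂ ∧ G.Adj v₂ v₃ ∧ G.Adj v₃ v₄ ∧ G.Adj v₂ v₅ ∧ G.Adj v₃ v₆ ∧
      4 ≤ deg G v₁ ∧ 4 ≤ deg G v₄ ∧
      deg G v₂ = 3 ∧ deg G v₃ = 3 ∧ deg G v₅ = 3 ∧ deg G v₆ = 3 := by
  classical
  rintro ⟨v₁, v₂, v₃, v₄, v₅, v₆, hne, h₁₂, h₂₃, h₃₄, h₂₅, h₃₆, hd₁, hd₄, hd₂, hd₃, hd₅, hd₆⟩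
  have h : IsConfig4334 G v₁ v₂ v₃ v₄ v₅ v₆ :=
    ⟨hne, h₁₂, h₂₃, h₃₄, h₂₅, h₃₆, hd₁, hd₄, hd₂, hd₃, hd₅, hd₆⟩
  obtain ⟨c, hc⟩ := hminEdges V _ (hplanar.anti h.deleteIncidenceSet_lt.le)
    (ncard_edgeSet_lt_of_lt h.deleteIncidenceSet_lt)
  obtain ⟨c', hc', h₅, h₆⟩ := h.exists_isWDColoring_ne hc
  exact hcex (h.wdColorable_of_isWDColoring hc' h₅ h₆)

/-- A minimal counterexample contains no six distinct vertices v₁,…,v₆ with edges v₁v₂, v₂v₃, v₃v₄, v₂v₅, v₃v₆, where d(v₁) ≥ 4, d(v₄) ≥ 4 and d(v₂) = d(v₃) = d(v₅) = d(v₆) = 3. -/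
theorem minCounterexample_no_4_3_3_4_configuration {V : Type} [Fintype V] (G : SimpleGraph V)
    (hplanar : IsPlanar G) (hcex : ¬ WDColorable G 3 6)
    (hminEdges : ∀ (W : Type) [Fintype W] (H : SimpleGraph W),
      IsPlanar H → H.edgeSet.ncard < G.edgeSet.ncard → WDColorable H 3 6)
    (hminVerts : ∀ (W : Type) [Fintype W] (H : SimpleGraph W),
      IsPlanar H → ¬ WDColorable H 3 6 → H.edgeSet.ncard = G.edgeSet.ncard →
      Nat.card V ≤ Nat.card W) :
    ¬ ∃ v₁ v₂ v₃ v₄ v₅ v₆ : V,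
      ([v₁, v₂, v₃, v₄, v₅, v₆] : List V).Pairwise (· ≠ ·) ∧
      G.Adj v₁ v₂ ∧ G.Adj v₂ v₃ ∧ G.Adj v₃ v₄ ∧ G.Adj v₂ v₅ ∧ G.Adj v₃ v₆ ∧
      4 ≤ deg G v₁ ∧ 4 ≤ deg G v₄ ∧
      deg G v₂ = 3 ∧ deg G v₃ = 3 ∧ deg G v₅ = 3 ∧ deg G v₆ = 3 :=
  minCounterexample_no_4_3_3_4_configuration_general G hplanar hcex hminEdges
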